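/- arXiv:1712.10267 — 3 statements merged into one kernel-verified Lean document; each statement's English description precedes it below -/
import Mathlib

section
/- Let H ≥ 0 be an unbounded self-adjoint operator with ground state energy 0 and spectrum S. Then the set D = { t ∈ ℝ : 0 ∈ closure(conv{ e^{−itE} : E ∈ S }) } is dense in ℝ, and for every t ∈ D, ‖U_t · U_t† − id‖_◇ = 2, where U_t = e^{−itH}. -/
open Complex Real

/-!
Two spectral values `E₀ < E₁` have antipodal phases `e^{-itE₀} = -e^{-itE₁}` whenever
`t (E₁ - E₀)` is an odd multiple of `π`; these times form a progression of step
`2π / (E₁ - E₀)`, arbitrarily fine since the spectrum is unbounded, and at each of them `0` is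
the midpoint of the two phases. Conversely a convex combination `∑ wᵢ e^{-itEᵢ}` is the
amplitude `⟪ψ, U_t ψ⟫` of the unit vector `ψ = ∑ √wᵢ eᵢ`, so when `0` lies in the closed hull
the lower bound `2 √(1 - |⟪ψ, U_t ψ⟫|²)` comes arbitrarily close to `2`.
-/

noncomputable def phase (t E : ℝ) : ℂ := Complex.exp (-(t * E) * Complex.I)

lemma phase_eq_neg_of_mul_sub_eq {t E₀ E₁ : ℝ} (k : ℤ)
    (h : t * (E₁ - E₀) = (2 * k + 1) * π) : phase t E₁ = -phase t E₀ := by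
  have harg : -(t * E₁ : ℂ) * I = -(t * E₀) * I - π * I - k * (2 * π * I) := by
    have hC : (t : ℂ) * (E₁ - E₀) = (2 * k + 1) * π := by exact_mod_cast h
    linear_combination (-I) * hC
  rw [phase, phase, harg, exp_periodic.sub_int_mul_eq, exp_sub_pi_mul_I]

lemma zero_mem_convexHull_of_mem_of_neg_mem {𝕜 E : Type*} [Field 𝕜] [LinearOrder 𝕜]
    [IsStrictOrderedRing 𝕜] [AddCommGroup E] [Module 𝕜 E] {s : Set E} {x : E}
    (hx : x ∈ s) (hnx : -x ∈ s) : (0 : E) ∈ convexHull 𝕜 s := by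
  simpa [midpoint_self_neg] using
    segment_subset_convexHull hx hnx (midpoint_mem_segment (𝕜 := 𝕜) x (-x))

lemma exists_int_dist_odd_mul_pi_div_le (t₀ : ℝ) {Δ : ℝ} (hΔ : 0 < Δ) :
    ∃ k : ℤ, dist ((2 * k + 1) * π / Δ) t₀ ≤ π / Δ := by
  have hx : t₀ = (2 * ((t₀ * Δ / π - 1) / 2) + 1) * π / Δ := by field_simp; ring
  set x := (t₀ * Δ / π - 1) / 2
  refine ⟨round x, ?_⟩
  have hround : |2 * (round x : ℝ) + 1 - (2 * x + 1)| ≤ 1 := by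
    rw [show 2 * (round x : ℝ) + 1 - (2 * x + 1) = -(2 * (x - round x)) by ring, abs_neg,
      abs_mul, abs_two]
    linarith [abs_sub_round x]
  rw [Real.dist_eq, hx, ← sub_div, ← sub_mul, abs_div, abs_mul, abs_of_pos pi_pos,
    abs_of_pos hΔ]
  gcongr
  simpa using mul_le_mul_of_nonneg_right hround pi_pos.le

lemma dense_setOf_zero_mem_convexHull_phase_image {S : Set ℝ} (hS : ¬ BddAbove S) :
    Dense {t : ℝ | (0 : ℂ) ∈ convexHull ℝ (phase t '' S)} := by
  obtain ⟨E₀, hE₀⟩ := nonempty_of_not_bddAbove hS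
  refine Metric.dense_iff.2 fun t₀ r hr => ?_
  obtain ⟨E₁, hE₁, hlt⟩ := not_bddAbove_iff.1 hS (E₀ + π / r)
  have hΔ : π / r < E₁ - E₀ := by linarith
  have hΔpos : 0 < E₁ - E₀ := (div_pos pi_pos hr).trans hΔ
  obtain ⟨k, hk⟩ := exists_int_dist_odd_mul_pi_div_le t₀ hΔpos
  set t := (2 * k + 1) * π / (E₁ - E₀)
  have hanti : phase t E₁ = -phase t E₀ :=
    phase_eq_neg_of_mul_sub_eq k (div_mul_cancel₀ _ hΔpos.ne')
  refine ⟨t, hk.trans_lt ((div_lt_comm₀ hΔpos hr).2 hΔ), ?_⟩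
  exact zero_mem_convexHull_of_mem_of_neg_mem (Set.mem_image_of_mem _ hE₀)
    (hanti ▸ Set.mem_image_of_mem _ hE₁)

lemma exists_norm_eq_one_inner_apply_eq_of_mem_convexHull {E ι : Type*}
    [NormedAddCommGroup E] [InnerProductSpace ℂ E] {e : ι → E} (he : Orthonormal ℂ e)
    {T : E →ₗ[ℂ] E} {μ : ι → ℂ} (hT : ∀ i, T (e i) = μ i • e i) {z : ℂ}
    (hz : z ∈ convexHull ℝ (Set.range μ)) :
    ∃ ψ : E, ‖ψ‖ = 1 ∧ inner ℂ ψ (T ψ) = z := by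
  rw [convexHull_range_eq_exists_affineCombination] at hz
  obtain ⟨s, w, hw₀, hw₁, rfl⟩ := hz
  rw [Finset.affineCombination_eq_linear_combination s μ w hw₁]
  set c : ι → ℂ := fun i => (√(w i) : ℂ)
  have hc : ∀ i ∈ s, (starRingEnd ℂ) (c i) * c i = w i := fun i hi => by
    rw [conj_ofReal, ← ofReal_mul, Real.mul_self_sqrt (hw₀ i hi)]
  have hTψ : T (∑ i ∈ s, c i • e i) = ∑ i ∈ s, (c i * μ i) • e i := by
    simp only [map_sum, map_smul, hT, smul_smul]
  have hψψ : inner ℂ (∑ i ∈ s, c i • e i) (∑ i ∈ s, c i • e i) = 1 := by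
    rw [he.inner_sum, Finset.sum_congr rfl hc, ← ofReal_sum, hw₁, ofReal_one]
  refine ⟨∑ i ∈ s, c i • e i, ?_, ?_⟩
  · have hnorm := inner_self_eq_norm_sq (𝕜 := ℂ) (∑ i ∈ s, c i • e i)
    rw [hψψ, RCLike.one_re] at hnorm
    exact (pow_eq_one_iff_of_nonneg (norm_nonneg _) two_ne_zero).1 hnorm.symm
  · rw [hTψ, he.inner_sum]
    refine Finset.sum_congr rfl fun i hi => ?_
    rw [← mul_assoc, hc i hi, real_smul]

theorem dense_times_of_maximal_diamond_distance_general
    {𝓗 : Type*} [NormedAddCommGroup 𝓗] [InnerProductSpace ℂ 𝓗]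
    {ι : Type*} (e : HilbertBasis ι ℂ 𝓗)
    (lam : ι → ℝ)
    (hunbdd : ¬ BddAbove (Set.range lam))         -- H unbounded
    (U : ℝ → 𝓗 →L[ℂ] 𝓗)
    (hU : ∀ t i, U t (e i) = Complex.exp (-(t * lam i) * Complex.I) • e i)
    (dn : ℝ → ℝ)                                  -- t ↦ ‖𝒰_t − id‖_◇
    (hdn_le : ∀ t, dn t ≤ 2)
    (hdn_ge : ∀ (t : ℝ) (ψ : 𝓗), ‖ψ‖ = 1 →
      2 * Real.sqrt (1 - ‖(inner ℂ ψ (U t ψ) : ℂ)‖ ^ 2) ≤ dn t) :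
    Dense {t : ℝ | (0 : ℂ) ∈ closure (convexHull ℝ
        ((fun E : ℝ => Complex.exp (-(t * E) * Complex.I)) '' Set.range lam))} ∧
    ∀ t ∈ {t : ℝ | (0 : ℂ) ∈ closure (convexHull ℝ
        ((fun E : ℝ => Complex.exp (-(t * E) * Complex.I)) '' Set.range lam))},
      dn t = 2 := by
  refine ⟨(dense_setOf_zero_mem_convexHull_phase_image hunbdd).mono
    fun t ht => subset_closure ht, fun t ht => le_antisymm (hdn_le t) ?_⟩
  have hclosed : IsClosed {z : ℂ | 2 * √(1 - ‖z‖ ^ 2) ≤ dn t} :=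
    isClosed_le (by fun_prop) continuous_const
  have hhull :
      convexHull ℝ (phase t '' Set.range lam) ⊆ {z : ℂ | 2 * √(1 - ‖z‖ ^ 2) ≤ dn t} := by
    intro z hz
    rw [← Set.range_comp] at hz
    obtain ⟨ψ, hψ, rfl⟩ := exists_norm_eq_one_inner_apply_eq_of_mem_convexHull e.orthonormal
      (T := (U t).toLinearMap) (hU t) hz
    exact hdn_ge t ψ hψ
  simpa using hclosed.closure_subset_iff.2 hhull ht

theorem dense_times_of_maximal_diamond_distance
    {𝓗 : Type*} [NormedAddCommGroup 𝓗] [InnerProductSpace ℂ 𝓗]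
    {ι : Type*} (e : HilbertBasis ι ℂ 𝓗)
    (lam : ι → ℝ)
    (hnn : ∀ i, 0 ≤ lam i)                        -- H ≥ 0
    (hground : IsGLB (Set.range lam) 0)           -- ground state energy 0
    (hunbdd : ¬ BddAbove (Set.range lam))         -- H unbounded
    (U : ℝ → 𝓗 →L[ℂ] 𝓗)
    (hU : ∀ t i, U t (e i) = Complex.exp (-(t * lam i) * Complex.I) • e i)
    (dn : ℝ → ℝ)                                  -- t ↦ ‖𝒰_t − id‖_◇
    (hdn_le : ∀ t, dn t ≤ 2)
    (hdn_ge : ∀ (t : ℝ) (ψ : 𝓗), ‖ψ‖ = 1 →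
      2 * Real.sqrt (1 - ‖(inner ℂ ψ (U t ψ) : ℂ)‖ ^ 2) ≤ dn t) :
    Dense {t : ℝ | (0 : ℂ) ∈ closure (convexHull ℝ
        ((fun E : ℝ => Complex.exp (-(t * E) * Complex.I)) '' Set.range lam))} ∧
    ∀ t ∈ {t : ℝ | (0 : ℂ) ∈ closure (convexHull ℝ
        ((fun E : ℝ => Complex.exp (-(t * E) * Complex.I)) '' Set.range lam))},
      dn t = 2 :=
  dense_times_of_maximal_diamond_distance_general e lam hunbdd U hU dn hdn_le hdn_ge
end

section
/- Let S ⊂ [0,∞) be unbounded, t₀ ∈ ℝ, and suppose 0 ∉ closure(conv{e^{−it₀E} : E ∈ S}). Then for every neighborhood of t₀ there exists t in it with 0 ∈ closure(conv{e^{−itE} : E ∈ S}). -/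
/-!
STATEMENT 12: Let S ⊂ [0,∞) be unbounded, t₀ ∈ ℝ, and suppose
0 ∉ closure(conv{e^{−it₀E} : E ∈ S}).  Then every neighborhood of t₀ contains a t with
0 ∈ closure(conv{e^{−itE} : E ∈ S}).
-/

open Real

theorem dense_hitting_convex_hull
    (S : Set ℝ) (hS : S ⊆ Set.Ici 0) (hunbdd : ¬ BddAbove S) (t₀ : ℝ)
    (h₀ : (0 : ℂ) ∉ closure (convexHull ℝ
        ((fun E : ℝ => Complex.exp (-(t₀ * E) * Complex.I)) '' S))) :
    ∀ V ∈ nhds t₀, ∃ t ∈ V,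
      (0 : ℂ) ∈ closure (convexHull ℝ
        ((fun E : ℝ => Complex.exp (-(t * E) * Complex.I)) '' S)) := by
  intro V hV
  obtain ⟨δ, hδ, hball⟩ := Metric.mem_nhds_iff.mp hV
  have hne : S.Nonempty := Set.nonempty_iff_ne_empty.mpr (fun h => hunbdd (h ▸ bddAbove_empty))
  obtain ⟨E, hE⟩ := hne
  have hπ : (0:ℝ) < π := Real.pi_pos
  obtain ⟨E', hE', hgt⟩ : ∃ E' ∈ S, E + 4*π/δ < E' := by
    by_contra h
    push_neg at h
    exact hunbdd ⟨E + 4*π/δ, fun x hx => h x hx⟩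
  set c : ℝ := E' - E with hc
  have hcpos : 4*π/δ < c := by simp only [hc]; linarith
  have hc0 : 0 < c := lt_trans (by positivity) hcpos
  set k : ℤ := ⌈(t₀ * c - π)/(2*π)⌉ with hk
  have hk1 : (t₀ * c - π)/(2*π) ≤ (k:ℝ) := Int.le_ceil _
  have hk2 : (k:ℝ) < (t₀ * c - π)/(2*π) + 1 := Int.ceil_lt_add_one _
  have h2π : (0:ℝ) < 2*π := by linarith
  clear_value k c
  have hb1 : t₀ * c ≤ π + 2*π*k := by
    have := (div_le_iff₀ h2π).mp hk1
    linarith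
  have hb2 : π + 2*π*k ≤ (t₀ + δ/2) * c := by
    have h3 : (k:ℝ)*(2*π) < (t₀ * c - π) + 2*π := by
      have h5 := mul_lt_mul_of_pos_right hk2 h2π
      rw [add_mul, div_mul_cancel₀ _ (ne_of_gt h2π), one_mul] at h5
      exact h5
    have h4 : δ/2 * c > 2*π := by
      have : δ/2 * (4*π/δ) = 2*π := by field_simp; ring
      nlinarith
    have hexp : (t₀ + δ/2) * c = t₀*c + δ/2*c := by ring
    linarith
  obtain ⟨t, ht, htc⟩ : ∃ t ∈ Set.Icc t₀ (t₀ + δ/2), t * c = π + 2*π*k := by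
    have hcont : ContinuousOn (fun t : ℝ => t * c) (Set.Icc t₀ (t₀ + δ/2)) :=
      (continuous_id.mul continuous_const).continuousOn
    have hmem : (π + 2*π*k) ∈ Set.Icc (t₀ * c) ((t₀ + δ/2) * c) := ⟨hb1, hb2⟩
    have := intermediate_value_Icc (by linarith : t₀ ≤ t₀ + δ/2) hcont hmem
    exact this
  refine ⟨t, hball ?_, ?_⟩
  · have : |t - t₀| < δ := by
      rw [abs_sub_lt_iff]; constructor <;> [skip; skip] <;>
        [linarith [ht.2]; linarith [ht.1]]
    simpa [Metric.mem_ball, Real.dist_eq] using this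
  · set z : ℂ := Complex.exp (-(t * E) * Complex.I) with hz
    have key : Complex.exp (-(t * E') * Complex.I) = -z := by
      have hE'eq : E' = E + c := by simp [hc]
      have hsplit : (-(t * E') * Complex.I : ℂ)
          = -(t * E) * Complex.I + -(t * c) * Complex.I := by
        rw [hE'eq]; push_cast; ring
      rw [hsplit, Complex.exp_add]
      have h1 : ((t * c : ℝ) : ℂ) = (π : ℝ) + 2*π*(k:ℂ) := by
        rw [htc]; push_cast; ring
      have h2 : (-(t * c) * Complex.I : ℂ)
          = -((π:ℝ) * Complex.I) + (-k : ℤ) * (2 * (π:ℝ) * Complex.I) := by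
        have : ((t * c : ℝ) : ℂ) = (t:ℂ) * (c:ℂ) := by push_cast; ring
        rw [← this, h1]; push_cast; ring
      rw [h2, Complex.exp_add, Complex.exp_int_mul_two_pi_mul_I,
        Complex.exp_neg, Complex.exp_pi_mul_I]
      rw [hz]
      ring_nf
    have hz1 : z ∈ (fun E : ℝ => Complex.exp (-(t * E) * Complex.I)) '' S :=
      ⟨E, hE, rfl⟩
    have hz2 : -z ∈ (fun E : ℝ => Complex.exp (-(t * E) * Complex.I)) '' S :=
      ⟨E', hE', key⟩
    have hseg : (0:ℂ) ∈ segment ℝ z (-z) := by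
      refine ⟨1/2, 1/2, by norm_num, by norm_num, by norm_num, ?_⟩
      simp [smul_neg]
    have := segment_subset_convexHull hz1 hz2 hseg
    exact subset_closure this
end

section
/- For a fixed F > 0, the function ξ ↦ ξ·S(γ(F/ξ)) is monotonically non-decreasing on (0, x₀] for any x₀ (equivalently, on an interval (0, x₀] it is maximized at ξ = x₀), where S(γ(E)) denotes the entropy of the Gibbs state of mean energy E for a Hamiltonian satisfying the Gibbs hypothesis. -/
/-!
STATEMENT 19: For fixed F > 0, the function ξ ↦ ξ·S(γ(F/ξ)) is monotonically
non-decreasing on (0, x₀] (equivalently, on (0, x₀] it is maximized at ξ = x₀), where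
S(γ(E)) is the entropy of the Gibbs state of mean energy E for a Hamiltonian satisfying
the Gibbs hypothesis.

The Gibbs entropy function E ↦ S(γ(E)) is modelled by a function Sγ with its known
properties (for a grounded Hamiltonian satisfying the Gibbs hypothesis): nonnegative,
non-decreasing and concave on [0, ∞).
-/

theorem gibbs_entropy_rescaled_monotone
    (Sγ : ℝ → ℝ)                                   -- E ↦ S(γ(E))
    (hnn : ∀ E : ℝ, 0 ≤ E → 0 ≤ Sγ E)
    (hmono : MonotoneOn Sγ (Set.Ici 0))
    (hconc : ConcaveOn ℝ (Set.Ici 0) Sγ)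
    (F x₀ : ℝ) (hF : 0 < F) (hx₀ : 0 < x₀) :
    MonotoneOn (fun ξ : ℝ => ξ * Sγ (F / ξ)) (Set.Ioc 0 x₀) := by
  intro a ha b hb hab
  simp only []
  have ha0 : (0:ℝ) < a := ha.1
  have hb0 : (0:ℝ) < b := hb.1
  have ht0 : 0 < a / b := div_pos ha0 hb0
  have ht1 : a / b ≤ 1 := div_le_one_of_le₀ hab hb0.le
  have hFa : (0:ℝ) ≤ F / a := (div_pos hF ha0).le
  have key := hconc.2 (Set.mem_Ici.mpr hFa) (Set.mem_Ici.mpr le_rfl) ht0.le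
    (sub_nonneg.mpr ht1) (by ring)
  simp only [smul_eq_mul] at key
  have hcomb : a / b * (F / a) + (1 - a / b) * 0 = F / b := by
    field_simp
    ring
  rw [hcomb] at key
  have h0 : 0 ≤ Sγ 0 := hnn 0 le_rfl
  have key2 : a / b * Sγ (F / a) ≤ Sγ (F / b) := by
    nlinarith [mul_nonneg (sub_nonneg.mpr ht1) h0]
  calc a * Sγ (F / a) = b * (a / b * Sγ (F / a)) := by field_simp
    _ ≤ b * Sγ (F / b) := by
        exact mul_le_mul_of_nonneg_left key2 hb0.le
end
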